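/- arXiv:2305.16317 — 3 statements merged into one kernel-verified Lean document; each statement's English description precedes it below -/
import Mathlib

section
/- If for some iteration k and timestep t the drifts along the current Picard iterate agree with the drifts along the sequential solution, i.e. s(x^k_i, i/T) = s(x⋆_i, i/T) for all i ≤ t, then the next Picard iterate is exact at time t+1: x^{k+1}_{t+1} = x⋆_{t+1}. (Proposition 1 of the paper.) -/
/-- **Proposition 1 (exact convergence of a Picard iterate).**
If for some iteration `k` and timestep `t` the drifts along the current Picard iterate
agree with the drifts along the sequential (Euler) solution, i.e.
`s(x^k_i, i/T) = s(x⋆_i, i/T)` for all `i ≤ t`, then the next Picard iterate is exact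
at time `t+1`: `x^{k+1}_{t+1} = x⋆_{t+1}`. -/
theorem picard_iterate_exact_step
    (D T : ℕ) (hT : 1 ≤ T)
    (s : EuclideanSpace ℝ (Fin D) → ℝ → EuclideanSpace ℝ (Fin D))
    (x₀ : EuclideanSpace ℝ (Fin D))
    -- the sequential (Euler) solution
    (xstar : ℕ → EuclideanSpace ℝ (Fin D))
    (hstar0 : xstar 0 = x₀)
    (hstar : ∀ t : ℕ, xstar (t + 1)
      = xstar t + ((1 : ℝ) / T) • s (xstar t) ((t : ℝ) / T))
    -- the discretized Picard iterates
    (x : ℕ → ℕ → EuclideanSpace ℝ (Fin D))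
    (hx0 : ∀ k : ℕ, x k 0 = x₀)
    (hupd : ∀ k t : ℕ, 1 ≤ t → t ≤ T →
      x (k + 1) t = x₀ + ((1 : ℝ) / T) • ∑ i ∈ Finset.range t, s (x k i) ((i : ℝ) / T))
    -- the drift-agreement hypothesis
    (k t : ℕ) (ht : t + 1 ≤ T)
    (hdrift : ∀ i ≤ t, s (x k i) ((i : ℝ) / T) = s (xstar i) ((i : ℝ) / T)) :
    x (k + 1) (t + 1) = xstar (t + 1) := by
  have hclosed : ∀ n : ℕ, xstar n
      = x₀ + ((1 : ℝ) / T) • ∑ i ∈ Finset.range n, s (xstar i) ((i : ℝ) / T) := by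
    intro n
    induction n with
    | zero => simp [hstar0]
    | succ m ih =>
      rw [hstar m, Finset.sum_range_succ, smul_add, ← add_assoc, ← ih]
  rw [hupd k (t + 1) (Nat.le_add_left 1 t) ht, hclosed (t + 1)]
  congr 2
  exact Finset.sum_congr rfl fun i hi =>
    hdrift i (Nat.lt_succ_iff.mp (Finset.mem_range.mp hi)) ▸ rfl
end

section
/- For every iteration k and every timestep t ≤ k, the discretized Picard iterate agrees with the sequential solution: x^k_t = x⋆_t. In particular, after k iterations the first k+1 points of the trajectory are exactly the sequential solution. -/
/-- For every iteration `k` and every timestep `t ≤ k` (with `t ≤ T`), the discretized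
Picard iterate agrees with the sequential (Euler) solution: `x^k_t = x⋆_t`.
In particular, after `k` iterations the first `k+1` points of the trajectory are
exactly the sequential solution. -/
theorem picard_iterate_prefix_exact
    (D T : ℕ) (hT : 1 ≤ T)
    (s : EuclideanSpace ℝ (Fin D) → ℝ → EuclideanSpace ℝ (Fin D))
    (x₀ : EuclideanSpace ℝ (Fin D))
    -- the sequential (Euler) solution
    (xstar : ℕ → EuclideanSpace ℝ (Fin D))
    (hstar0 : xstar 0 = x₀)
    (hstar : ∀ t : ℕ, xstar (t + 1)
      = xstar t + ((1 : ℝ) / T) • s (xstar t) ((t : ℝ) / T))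
    -- the discretized Picard iterates
    (x : ℕ → ℕ → EuclideanSpace ℝ (Fin D))
    (hx0 : ∀ k : ℕ, x k 0 = x₀)
    (hupd : ∀ k t : ℕ, 1 ≤ t → t ≤ T →
      x (k + 1) t = x₀ + ((1 : ℝ) / T) • ∑ i ∈ Finset.range t, s (x k i) ((i : ℝ) / T)) :
    ∀ k t : ℕ, t ≤ k → t ≤ T → x k t = xstar t := by
  have hint : ∀ t : ℕ, xstar t
      = x₀ + ((1 : ℝ) / T) • ∑ i ∈ Finset.range t, s (xstar i) ((i : ℝ) / T) := by
    intro t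
    induction t with
    | zero => simp [hstar0]
    | succ n ih =>
      rw [Finset.sum_range_succ, smul_add, ← add_assoc, ← ih, hstar n]
  intro k
  induction k with
  | zero =>
    intro t ht _
    interval_cases t
    simp [hx0, hstar0]
  | succ k ih =>
    intro t ht htT
    rcases Nat.eq_zero_or_pos t with h0 | h1
    · subst h0; simp [hx0, hstar0]
    · rw [hupd k t h1 htT, hint t]
      congr 2
      apply Finset.sum_congr rfl
      intro i hi
      have hi' := Finset.mem_range.mp hi
      rw [ih i (by omega) (by omega)]
end

section
/- The discretized Picard iteration converges exactly in at most T iterations: for every timestep t ∈ [0,T], x^T_t = x⋆_t. In the worst case, T parallel iterations suffice to reproduce sequential sampling exactly. -/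
/-- The discretized Picard iteration converges exactly in at most `T` iterations:
for every timestep `t ∈ [0,T]`, `x^T_t = x⋆_t`. In the worst case, `T` parallel
iterations suffice to reproduce sequential sampling exactly. -/
theorem picard_iterate_converges_in_T_steps
    (D T : ℕ) (hT : 1 ≤ T)
    (s : EuclideanSpace ℝ (Fin D) → ℝ → EuclideanSpace ℝ (Fin D))
    (x₀ : EuclideanSpace ℝ (Fin D))
    -- the sequential (Euler) solution
    (xstar : ℕ → EuclideanSpace ℝ (Fin D))
    (hstar0 : xstar 0 = x₀)
    (hstar : ∀ t : ℕ, xstar (t + 1)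
      = xstar t + ((1 : ℝ) / T) • s (xstar t) ((t : ℝ) / T))
    -- the discretized Picard iterates
    (x : ℕ → ℕ → EuclideanSpace ℝ (Fin D))
    (hx0 : ∀ k : ℕ, x k 0 = x₀)
    (hupd : ∀ k t : ℕ, 1 ≤ t → t ≤ T →
      x (k + 1) t = x₀ + ((1 : ℝ) / T) • ∑ i ∈ Finset.range t, s (x k i) ((i : ℝ) / T)) :
    ∀ t ≤ T, x T t = xstar t := by
  -- closed form for xstar
  have hA : ∀ t : ℕ, xstar t
      = x₀ + ((1 : ℝ) / T) • ∑ i ∈ Finset.range t, s (xstar i) ((i : ℝ) / T) := by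
    intro t
    induction t with
    | zero => simp [hstar0]
    | succ n ih =>
      rw [hstar, Finset.sum_range_succ, smul_add, ← add_assoc, ← ih]
  -- main claim by strong induction
  have hB : ∀ t : ℕ, t ≤ T → ∀ k : ℕ, t ≤ k → x k t = xstar t := by
    intro t
    induction t using Nat.strong_induction_on with
    | _ t ih =>
      intro htT k htk
      match t, htk with
      | 0, _ => rw [hx0, hstar0]
      | (t + 1), htk =>
        obtain ⟨k, rfl⟩ : ∃ k', k = k' + 1 := ⟨k - 1, by omega⟩
        rw [hupd k (t + 1) (by omega) htT, hA (t + 1)]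
        congr 2
        apply Finset.sum_congr rfl
        intro i hi
        simp only [Finset.mem_range] at hi
        rw [ih i (by omega) (by omega) k (by omega)]
  intro t ht
  exact hB t ht T ht
end
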